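/- Let q be an odd positive integer and c a positive even integer. Write c(c+2) = 2^{k+1} · m with m odd (so k ≥ 2). Then the squarefree part of [c]_q · [c+2]_q has the same parity (odd/even) as the squarefree part of c(c+2). In particular, [c]_q[c+2]_q and c(c+2) generate the same class in ℚ^×/(ℚ^×)² up to odd squarefree factors: their squarefree parts are both even or both odd. -/

import Mathlib

/-!
By lifting the exponent at `2`, for odd `q` and even `n ≠ 0` one has
`v₂([n]_q) = v₂(q + 1) + v₂(n) - 1`. Hence `v₂([c]_q [c+2]_q)` and `v₂(c (c+2))` differ by the
even number `2 (v₂(q + 1) - 1)`. The parity of `v₂` is an invariant of the square class, and a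
squarefree number is odd exactly when its `v₂` is even.
-/

open Finset

theorem padicValNat_two_geom_sum_add_one {q n : ℕ} (hq : Odd q) (hn : Even n) (hn0 : n ≠ 0) :
    padicValNat 2 (∑ i ∈ range n, q ^ i) + 1 = padicValNat 2 (q + 1) + padicValNat 2 n := by
  rcases Nat.lt_or_eq_of_le hq.pos with hq1 | rfl
  · have hsum : (∑ i ∈ range n, q ^ i) * (q - 1) = q ^ n - 1 := geom_sum_mul_of_one_le hq1.le n
    have hval := congrArg (padicValNat 2) hsum
    rw [padicValNat.mul (geom_sum_pos q.zero_le hn0).ne' (by omega)] at hval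
    have hLTE := padicValNat.pow_two_sub_one hq1 hq.not_two_dvd_nat hn0 hn
    omega
  · simp [add_comm]

theorem even_padicValNat_iff_of_div_eq_sq {p : ℕ} [Fact p.Prime] {N d : ℕ} (hN : N ≠ 0)
    (hd : d ≠ 0) {r : ℚ} (h : (N : ℚ) / d = r ^ 2) :
    Even (padicValNat p N) ↔ Even (padicValNat p d) := by
  have hval := congrArg (padicValRat p) h
  rw [padicValRat.div (by exact_mod_cast hN) (by exact_mod_cast hd), padicValRat.pow,
    padicValRat.of_nat, padicValRat.of_nat] at hval
  rw [← Int.even_coe_nat, ← Int.even_coe_nat (padicValNat p d), ← Int.even_sub, hval]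
  exact ⟨padicValRat p r, by push_cast; ring⟩

theorem Squarefree.odd_iff_even_padicValNat_two {d : ℕ} (hd : Squarefree d) :
    Odd d ↔ Even (padicValNat 2 d) := by
  have hle : padicValNat 2 d ≤ 1 := by
    simpa [Nat.factorization_def d Nat.prime_two] using hd.natFactorization_le_one 2
  have hzero : padicValNat 2 d = 0 ↔ ¬2 ∣ d := by simp [padicValNat.eq_zero_iff, hd.ne_zero]
  rw [Nat.odd_iff, ← Nat.two_dvd_ne_zero, ← hzero, Nat.even_iff]
  omega

theorem even_padicValNat_two_geom_sum_mul_iff {q c : ℕ} (hq : Odd q) (hc : Even c)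
    (hc0 : c ≠ 0) :
    Even (padicValNat 2 ((∑ i ∈ range c, q ^ i) * ∑ i ∈ range (c + 2), q ^ i)) ↔
      Even (padicValNat 2 (c * (c + 2))) := by
  have hc2 : Even (c + 2) := hc.add even_two
  rw [padicValNat.mul (geom_sum_pos q.zero_le hc0).ne' (geom_sum_pos q.zero_le (by omega)).ne',
    padicValNat.mul hc0 (by omega), Nat.even_iff, Nat.even_iff]
  have h₁ := padicValNat_two_geom_sum_add_one hq hc hc0
  have h₂ := padicValNat_two_geom_sum_add_one hq hc2 (by omega)
  omega

theorem even_c_squarefree_part_parity_general (q : ℕ) (hqodd : Odd q)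
    (c : ℕ) (hcpos : 0 < c) (hceven : Even c)
    (a' b' : ℕ) (ha' : Squarefree a') (hb' : Squarefree b')
    (ha : ∃ r : ℚ, (((∑ i ∈ Finset.range c, q ^ i) * (∑ i ∈ Finset.range (c + 2), q ^ i) : ℕ) : ℚ)
        / (a' : ℚ) = r ^ 2)
    (hb : ∃ s : ℚ, ((c * (c + 2) : ℕ) : ℚ) / (b' : ℚ) = s ^ 2) :
    (Odd a' ↔ Odd b') := by
  obtain ⟨r, hr⟩ := ha
  obtain ⟨s, hs⟩ := hb
  have hgeom_ne_zero (n : ℕ) (hn : n ≠ 0) : ∑ i ∈ range n, q ^ i ≠ 0 :=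
    (geom_sum_pos q.zero_le hn).ne'
  rw [ha'.odd_iff_even_padicValNat_two, hb'.odd_iff_even_padicValNat_two,
    ← even_padicValNat_iff_of_div_eq_sq
      (mul_ne_zero (hgeom_ne_zero c hcpos.ne') (hgeom_ne_zero (c + 2) (by omega))) ha'.ne_zero hr,
    ← even_padicValNat_iff_of_div_eq_sq (by positivity) hb'.ne_zero hs]
  exact even_padicValNat_two_geom_sum_mul_iff hqodd hceven hcpos.ne'

theorem even_c_squarefree_part_parity (q : ℕ) (hqodd : Odd q) (hqpos : 0 < q)
    (c : ℕ) (hcpos : 0 < c) (hceven : Even c)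
    (k m : ℕ) (hm : Odd m) (hfact : c * (c + 2) = 2 ^ (k + 1) * m)
    (a' b' : ℕ) (ha' : Squarefree a') (hb' : Squarefree b')
    (ha : ∃ r : ℚ, (((∑ i ∈ Finset.range c, q ^ i) * (∑ i ∈ Finset.range (c + 2), q ^ i) : ℕ) : ℚ)
        / (a' : ℚ) = r ^ 2)
    (hb : ∃ s : ℚ, ((c * (c + 2) : ℕ) : ℚ) / (b' : ℚ) = s ^ 2) :
    (Odd a' ↔ Odd b') :=
  even_c_squarefree_part_parity_general q hqodd c hcpos hceven a' b' ha' hb' ha hb
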